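/- arXiv:1905.03366 — 4 statements merged into one kernel-verified Lean document; each statement's English description precedes it below -/
import Mathlib

section
/- Let k be a field of odd characteristic p and let the group Z/p act on the polynomial ring k[X,Y] by k-algebra automorphisms fixing Y and sending X to X - μY, where μ ∈ k is nonzero. Then the ring of invariants is k[φ, Y], where φ = ∏_{a∈𝔽_p} (X + aμY). -/
open MvPolynomial

/-- The `k`-algebra automorphism of `k[X,Y]` determined by `X ↦ X - cY`, `Y ↦ Y`
(we write `X = X 0`, `Y = X 1`). -/
noncomputable def substAct (k : Type*) [CommRing k] (c : k) :
    MvPolynomial (Fin 2) k →ₐ[k] MvPolynomial (Fin 2) k :=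
  aeval (fun j => if j = 0 then X 0 - C c * X 1 else X 1)
/-!
Via `finSuccEquiv`, `k[X,Y] ≅ (k[Y])[X]` and the action becomes the Taylor shift
`f(X) ↦ f(X - c)` with `c = μY ≠ 0` in the domain `k[Y]` of characteristic `p`. For an invariant
`f` of `X`-degree `n ≥ 1`, the coefficient of `X^(n-1)` in `f(X - c) = f(X)` gives
`n · c · lc(f) = 0`, so `p ∣ n`. Since `φ` is monic of `X`-degree `p` and invariant,
`f - lc(f) · φ^(n/p)` is an invariant of smaller degree, and induction on the degree puts `f`
in `k[Y][φ] = k[φ, Y]`.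
-/

section TaylorInvariants

open Polynomial

variable {R : Type*} [CommRing R]

theorem Polynomial.coeff_taylor_of_natDegree_le_succ {f : R[X]} {k : ℕ}
    (hf : f.natDegree ≤ k + 1) (r : R) :
    (taylor r f).coeff k = f.coeff k + (k + 1) * f.coeff (k + 1) * r := by
  have hdeg : (hasseDeriv k f).natDegree < 2 := by
    have := natDegree_hasseDeriv_le f k
    omega
  rw [taylor_coeff, eval_eq_sum_range' hdeg]
  simp [Finset.sum_range_succ, hasseDeriv_coeff, add_comm 1 k, Nat.choose_succ_self_right]

theorem Polynomial.dvd_natDegree_of_taylor_eq_self [IsDomain R] (p : ℕ) [CharP R p]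
    {c : R} (hc : c ≠ 0) {f : R[X]} (hf : taylor c f = f) : p ∣ f.natDegree := by
  by_cases h0 : f.natDegree = 0
  · simp [h0]
  obtain ⟨k, hk⟩ := Nat.exists_eq_add_one_of_ne_zero h0
  have hlc : f.leadingCoeff ≠ 0 := by
    rw [leadingCoeff_ne_zero]
    rintro rfl
    simp at hk
  have hcoeff := congrArg (coeff · k) hf
  simp only [coeff_taylor_of_natDegree_le_succ hk.le] at hcoeff
  have hvanish : ((k + 1 : ℕ) : R) * f.leadingCoeff * c = 0 := by
    rw [leadingCoeff, hk]
    push_cast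
    linear_combination hcoeff
  rw [← CharP.cast_eq_zero_iff R p, hk]
  simpa [hc, hlc] using hvanish

theorem Polynomial.mem_of_taylor_eq_self [IsDomain R] {p : ℕ} [CharP R p] {c : R}
    (hc : c ≠ 0) {Φ : R[X]} (hΦ : Φ.Monic) (hΦp : Φ.natDegree = p) (hΦc : taylor c Φ = Φ)
    {S : Subsemiring R[X]} (hCS : ∀ r, C r ∈ S) (hΦS : Φ ∈ S) {f : R[X]} (hf : taylor c f = f) :
    f ∈ S := by
  induction f using degree_lt_wf.induction with
  | _ f ih =>
  by_cases hf0 : f = 0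
  · simp [hf0, zero_mem]
  obtain ⟨m, hm⟩ := dvd_natDegree_of_taylor_eq_self p hc hf
  set q := C f.leadingCoeff * Φ ^ m
  have hlc : f.leadingCoeff ≠ 0 := leadingCoeff_ne_zero.mpr hf0
  have hq_lc : q.leadingCoeff = f.leadingCoeff := by
    simp [q, (hΦ.pow m).leadingCoeff]
  have hq_deg : f.degree = q.degree := by
    rw [degree_C_mul hlc, degree_eq_natDegree hf0, degree_eq_natDegree (hΦ.pow m).ne_zero,
      hΦ.natDegree_pow, hΦp, hm, mul_comm]
  have hrest : f - q ∈ S := by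
    refine ih _ (degree_sub_lt_left hq_deg hf0 hq_lc.symm) ?_
    simp [q, taylor_mul, taylor_pow, hf, hΦc]
  simpa [q] using add_mem hrest (mul_mem (hCS f.leadingCoeff) (pow_mem hΦS m))

end TaylorInvariants

section ShearInvariants

variable {k : Type*}

noncomputable def orbitProd (p : ℕ) [NeZero p] (k : Type*) [CommRing k] [CharP k p] (μ : k) :
    MvPolynomial (Fin 2) k :=
  ∏ a : ZMod p, (X 0 + C (ZMod.castHom (dvd_refl p) k a * μ) * X 1)

theorem substAct_X_zero [CommRing k] (c : k) : substAct k c (X 0) = X 0 - C c * X 1 := by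
  simp [substAct]

theorem substAct_X_one [CommRing k] (c : k) : substAct k c (X 1) = X 1 := by
  simp [substAct]

theorem substAct_X_zero_add_C_mul_X_one [CommRing k] (c d : k) :
    substAct k c (X 0 + C d * X 1) = X 0 + C (d - c) * X 1 := by
  simp only [map_add, map_mul, substAct_X_zero, substAct_X_one, algHom_C, algebraMap_eq, C_sub]
  ring

theorem substAct_orbitProd (p : ℕ) [NeZero p] [CommRing k] [CharP k p] (μ : k) :
    substAct k μ (orbitProd p k μ) = orbitProd p k μ := by
  rw [orbitProd, map_prod]
  simp_rw [substAct_X_zero_add_C_mul_X_one]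
  exact Fintype.prod_equiv (Equiv.subRight 1) _ _ fun a => by simp [sub_mul]

theorem MvPolynomial.finSuccEquiv_C [CommRing k] (n : ℕ) (d : k) :
    finSuccEquiv k n (C d) = Polynomial.C (C d) := by
  simp [finSuccEquiv_apply]

theorem MvPolynomial.finSuccEquiv_X_one [CommRing k] :
    finSuccEquiv k 1 (X 1) = Polynomial.C (X 0) := by
  rw [show (1 : Fin 2) = Fin.succ 0 from rfl, finSuccEquiv_X_succ]

theorem finSuccEquiv_X_zero_add_C_mul_X_one [CommRing k] (d : k) :
    finSuccEquiv k 1 (X 0 + C d * X 1) = Polynomial.X + Polynomial.C (C d * X 0) := by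
  simp [finSuccEquiv_X_zero, finSuccEquiv_X_one, finSuccEquiv_C]

theorem finSuccEquiv_substAct [CommRing k] (c : k) (f : MvPolynomial (Fin 2) k) :
    finSuccEquiv k 1 (substAct k c f) = Polynomial.taylor (-(C c * X 0)) (finSuccEquiv k 1 f) := by
  suffices (finSuccEquiv k 1).toAlgHom.comp (substAct k c) =
      ((Polynomial.taylorAlgHom (-(C c * X 0))).restrictScalars k).comp
        (finSuccEquiv k 1).toAlgHom from congr($this f)
  refine MvPolynomial.algHom_ext fun i => ?_
  fin_cases i <;>
    simp [substAct, finSuccEquiv_X_zero, finSuccEquiv_X_one, finSuccEquiv_C, sub_eq_add_neg]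

theorem monic_finSuccEquiv_orbitProd (p : ℕ) [NeZero p] [CommRing k] [CharP k p] (μ : k) :
    (finSuccEquiv k 1 (orbitProd p k μ)).Monic := by
  rw [orbitProd, map_prod]
  simp_rw [finSuccEquiv_X_zero_add_C_mul_X_one]
  exact Polynomial.monic_prod_of_monic _ _ fun a _ => Polynomial.monic_X_add_C _

theorem natDegree_finSuccEquiv_orbitProd (p : ℕ) [NeZero p] [CommRing k] [Nontrivial k]
    [CharP k p] (μ : k) : (finSuccEquiv k 1 (orbitProd p k μ)).natDegree = p := by
  rw [orbitProd, map_prod]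
  simp_rw [finSuccEquiv_X_zero_add_C_mul_X_one]
  rw [Polynomial.natDegree_prod_of_monic _ _ fun a _ => Polynomial.monic_X_add_C _]
  simp only [Polynomial.natDegree_X_add_C, Finset.sum_const, Finset.card_univ, ZMod.card,
    smul_eq_mul, mul_one]

theorem finSuccEquiv_symm_C_mem_adjoin_X_one [CommRing k] (r : MvPolynomial (Fin 1) k) :
    (finSuccEquiv k 1).symm (Polynomial.C r) ∈ Algebra.adjoin k {X 1} := by
  suffices Algebra.adjoin k (Set.range X) ≤
      (Algebra.adjoin k {X 1}).comap ((finSuccEquiv k 1).symm.toAlgHom.comp Polynomial.CAlgHom) by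
    rw [adjoin_range_X] at this
    exact this trivial
  refine Algebra.adjoin_le ?_
  rintro _ ⟨i, rfl⟩
  fin_cases i
  simp [← finSuccEquiv_X_one, Algebra.self_mem_adjoin_singleton]

end ShearInvariants

theorem invariants_Zp_general (p : ℕ) [Fact p.Prime]
    (k : Type*) [Field k] [CharP k p] (μ : k) (hμ : μ ≠ 0) :
    AlgHom.equalizer (substAct k μ) (AlgHom.id k (MvPolynomial (Fin 2) k)) =
      Algebra.adjoin k
        {∏ a : ZMod p, (X 0 + C (ZMod.castHom (dvd_refl p) k a * μ) * X 1),
         (X 1 : MvPolynomial (Fin 2) k)} := by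
  change _ = Algebra.adjoin k {orbitProd p k μ, X 1}
  refine le_antisymm (fun f hf => ?_) (Algebra.adjoin_le ?_)
  · set S := (Algebra.adjoin k {orbitProd p k μ, X 1}).comap (finSuccEquiv k 1).symm.toAlgHom
    have hc : -(C μ * X 0 : MvPolynomial (Fin 1) k) ≠ 0 := by simp [hμ, X_ne_zero]
    have hCS (r : MvPolynomial (Fin 1) k) : Polynomial.C r ∈ S :=
      Algebra.adjoin_mono (Set.subset_insert _ _) (finSuccEquiv_symm_C_mem_adjoin_X_one r)
    have hΦS : finSuccEquiv k 1 (orbitProd p k μ) ∈ S := by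
      simpa [S] using Algebra.subset_adjoin (Set.mem_insert _ _)
    have hS : finSuccEquiv k 1 f ∈ S.toSubsemiring :=
      Polynomial.mem_of_taylor_eq_self (p := p) hc (monic_finSuccEquiv_orbitProd p μ)
        (natDegree_finSuccEquiv_orbitProd p μ)
        (by rw [← finSuccEquiv_substAct, substAct_orbitProd]) hCS hΦS
        (by rw [← finSuccEquiv_substAct, (AlgHom.mem_equalizer _ _ f).mp hf, AlgHom.id_apply])
    simpa [S] using hS
  · rintro _ (rfl | rfl)
    exacts [substAct_orbitProd p μ, substAct_X_one μ]

/-- Let `k` be a field of odd characteristic `p`, and let the generator `g` of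
`ℤ/p` act on `k[X,Y]` by `g(Y) = Y`, `g(X) = X - μY` with `μ ≠ 0`.  Then the ring of invariants
is `k[φ, Y]` where `φ = ∏_{a ∈ 𝔽_p} (X + aμY)`. -/
theorem invariants_Zp (p : ℕ) [Fact p.Prime] (hp : Odd p)
    (k : Type*) [Field k] [CharP k p] (μ : k) (hμ : μ ≠ 0) :
    AlgHom.equalizer (substAct k μ) (AlgHom.id k (MvPolynomial (Fin 2) k)) =
      Algebra.adjoin k
        {∏ a : ZMod p, (X 0 + C (ZMod.castHom (dvd_refl p) k a * μ) * X 1),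
         (X 1 : MvPolynomial (Fin 2) k)} :=
  invariants_Zp_general p k μ hμ
end

section
/- Let k be a field of characteristic p > 2, H = (Z/p)^s with s ≥ 1, acting on V^# = kX ⊕ kY with generators g_i fixing Y and sending X to X - μ_iY, where μ₁,…,μ_s are 𝔽_p-linearly independent. Then for every n with 0 ≤ n ≤ p^s - 1, the space of H-invariants in the n-th symmetric power S^n(V^#) is one-dimensional, spanned by Y^n. -/
/-!
Invariance under `X ↦ X - μᵢY` propagates to `X ↦ X - tY` for every `t` in the additive group
generated by the `μᵢ`, which has `p ^ s` elements by their independence. Evaluating at `(t, 1)`,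
the dehomogenization `f(x, 1)` takes the value `f(0, 1)` at these `p ^ s` points; as its degree
is at most `n < p ^ s`, it is constant, and a binary form of degree `n` whose dehomogenization is
a constant `c` equals `c • Yⁿ`.
-/

open MvPolynomial

section substAct

variable {k : Type*} [CommRing k]

theorem substAct_add (a b : k) : substAct k (a + b) = (substAct k a).comp (substAct k b) := by
  refine algHom_ext fun j => ?_
  fin_cases j <;> simp [substAct]; ring

theorem substAct_zero : substAct k 0 = AlgHom.id k (MvPolynomial (Fin 2) k) := by
  refine algHom_ext fun j => ?_
  fin_cases j <;> simp [substAct]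

theorem substAct_X_one_pow (c : k) (n : ℕ) : substAct k c (X 1 ^ n) = X 1 ^ n := by
  simp [substAct]

theorem eval_substAct (c : k) (x : Fin 2 → k) (f : MvPolynomial (Fin 2) k) :
    eval x (substAct k c f) = eval ![x 0 - c * x 1, x 1] f := by
  induction f using MvPolynomial.induction_on with
  | C a => simp
  | add p q hp hq => simp_all
  | mul_X p j ih => fin_cases j <;> simp_all [substAct]

def substStabilizer (f : MvPolynomial (Fin 2) k) : AddSubgroup k where
  carrier := {t | substAct k t f = f}
  zero_mem' := by simp [substAct_zero]
  add_mem' {a b} ha hb := by simp_all [substAct_add]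
  neg_mem' {a} ha := by
    calc substAct k (-a) f = substAct k (-a) (substAct k a f) := by rw [ha]
      _ = f := by rw [← AlgHom.comp_apply, ← substAct_add, neg_add_cancel, substAct_zero]; rfl

end substAct

section dehomogenize

variable {k : Type*} [CommRing k]

noncomputable def dehomogenize : MvPolynomial (Fin 2) k →ₐ[k] Polynomial k :=
  aeval ![Polynomial.X, 1]

theorem eval_dehomogenize (t : k) (f : MvPolynomial (Fin 2) k) :
    (dehomogenize f).eval t = eval ![t, 1] f := by
  induction f using MvPolynomial.induction_on with
  | C a => simp [dehomogenize]
  | add p q hp hq => simp_all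
  | mul_X p j ih => fin_cases j <;> simp_all [dehomogenize]

theorem dehomogenize_smul_X_one_pow (c : k) (n : ℕ) :
    dehomogenize (c • X 1 ^ n : MvPolynomial (Fin 2) k) = Polynomial.C c := by
  simp [dehomogenize, Polynomial.smul_eq_C_mul]

theorem eq_single_add_single_of_add_eq {m : Fin 2 →₀ ℕ} {n : ℕ} (h : m 0 + m 1 = n) :
    m = Finsupp.single 0 (m 0) + Finsupp.single 1 (n - m 0) := by
  ext i
  fin_cases i <;> simp; omega

theorem MvPolynomial.IsHomogeneous.add_eq_of_coeff_ne_zero {f : MvPolynomial (Fin 2) k} {n : ℕ}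
    (hf : f.IsHomogeneous n) {m : Fin 2 →₀ ℕ} (hm : coeff m f ≠ 0) : m 0 + m 1 = n := by
  simpa [Finsupp.weight_apply, Finsupp.sum_fintype, Fin.sum_univ_two] using hf hm

theorem MvPolynomial.IsHomogeneous.coeff_dehomogenize {f : MvPolynomial (Fin 2) k} {n : ℕ}
    (hf : f.IsHomogeneous n) (j : ℕ) :
    (dehomogenize f).coeff j = coeff (Finsupp.single 0 j + Finsupp.single 1 (n - j)) f := by
  classical
  have hsum : dehomogenize f = ∑ m ∈ f.support, Polynomial.monomial (m 0) (coeff m f) := by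
    conv_lhs => rw [f.as_sum, map_sum]
    refine Finset.sum_congr rfl fun m _ => ?_
    simp [dehomogenize, aeval_monomial, Finsupp.prod_fintype, Fin.prod_univ_two,
      Polynomial.C_mul_X_pow_eq_monomial]
  rw [hsum, Polynomial.finsetSum_coeff]
  simp only [Polynomial.coeff_monomial]
  refine (Finset.sum_eq_single (Finsupp.single 0 j + Finsupp.single 1 (n - j))
    (fun m hm hne => if_neg fun hj => hne ?_) (fun h => ?_)).trans ?_
  · rw [← hj]
    exact eq_single_add_single_of_add_eq (hf.add_eq_of_coeff_ne_zero (mem_support_iff.mp hm))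
  · rw [notMem_support_iff.mp h, ite_self]
  · simp

theorem MvPolynomial.IsHomogeneous.eq_zero_of_dehomogenize_eq_zero
    {f : MvPolynomial (Fin 2) k} {n : ℕ} (hf : f.IsHomogeneous n) (h : dehomogenize f = 0) : f = 0 := by
  ext m
  rw [coeff_zero]
  by_contra hm
  rw [eq_single_add_single_of_add_eq (hf.add_eq_of_coeff_ne_zero hm), ← hf.coeff_dehomogenize, h,
    Polynomial.coeff_zero] at hm
  exact hm rfl

theorem MvPolynomial.IsHomogeneous.natDegree_dehomogenize_le {f : MvPolynomial (Fin 2) k} {n : ℕ}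
    (hf : f.IsHomogeneous n) : (dehomogenize f).natDegree ≤ n := by
  refine Polynomial.natDegree_le_iff_coeff_eq_zero.2 fun j hj => ?_
  rw [hf.coeff_dehomogenize]
  by_contra h
  have := hf.add_eq_of_coeff_ne_zero h
  simp only [Finsupp.add_apply, Finsupp.single_apply, if_true, Fin.one_eq_zero_iff, zero_ne_one,
    if_false] at this
  omega

end dehomogenize

theorem MvPolynomial.IsHomogeneous.exists_eq_smul_X_one_pow_of_forall_substAct_eq
    {k : Type*} [CommRing k] [IsDomain k] {f : MvPolynomial (Fin 2) k} {n : ℕ}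
    (hf : f.IsHomogeneous n) {ι : Type*} [Fintype ι] {v : ι → k} (hv : Function.Injective v)
    (hn : n < Fintype.card ι) (hfix : ∀ i, substAct k (v i) f = f) :
    ∃ c : k, f = c • X 1 ^ n := by
  set c := eval ![0, 1] f
  have hconst : dehomogenize f = Polynomial.C c := by
    refine Polynomial.eq_of_natDegree_lt_card_of_eval_eq _ _ hv (fun i => ?_) ?_
    · rw [Polynomial.eval_C, eval_dehomogenize, ← hfix i, eval_substAct]
      simp [c]
    · simpa using hf.natDegree_dehomogenize_le.trans_lt hn
  have hY : (c • X 1 ^ n : MvPolynomial (Fin 2) k).IsHomogeneous n := by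
    simpa [smul_eq_C_mul] using isHomogeneous_C_mul_X_pow c 1 n
  refine ⟨c, sub_eq_zero.mp ((hf.sub hY).eq_zero_of_dehomogenize_eq_zero ?_)⟩
  rw [map_sub, hconst, dehomogenize_smul_X_one_pow, sub_self]

theorem mem_closure_range_of_sum_castHom_mul {p : ℕ} {k : Type*} [NeZero p] [Ring k] [CharP k p]
    {ι : Type*} [Fintype ι] (μ : ι → k) (c : ι → ZMod p) :
    ∑ i, ZMod.castHom (dvd_refl p) k (c i) * μ i ∈ AddSubgroup.closure (Set.range μ) := by
  refine AddSubgroup.sum_mem _ fun i _ => ?_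
  rw [ZMod.castHom_apply, ← ZMod.natCast_val, ← nsmul_eq_mul]
  exact AddSubgroup.nsmul_mem _ (AddSubgroup.subset_closure (Set.mem_range_self i)) _

theorem injective_sum_castHom_mul {p : ℕ} {k : Type*} [Ring k] [CharP k p]
    {ι : Type*} [Fintype ι] {μ : ι → k}
    (hμ : ∀ c : ι → ZMod p, ∑ i, ZMod.castHom (dvd_refl p) k (c i) * μ i = 0 → c = 0) :
    Function.Injective fun c : ι → ZMod p => ∑ i, ZMod.castHom (dvd_refl p) k (c i) * μ i := by
  intro a b hab
  rw [← sub_eq_zero]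
  refine hμ _ ?_
  simp only [Pi.sub_apply, map_sub, sub_mul, Finset.sum_sub_distrib, hab, sub_self]

theorem invariants_in_symmetric_powers_general (p : ℕ) [Fact p.Prime]
    (k : Type*) [Field k] [CharP k p] (s : ℕ) (μ : Fin s → k)
    (hμ : ∀ c : Fin s → ZMod p,
      ∑ i, ZMod.castHom (dvd_refl p) k (c i) * μ i = 0 → c = 0)
    (n : ℕ) (hn : n ≤ p ^ s - 1)
    (f : MvPolynomial (Fin 2) k) (hf : f ∈ homogeneousSubmodule (Fin 2) k n) :
    (∀ i : Fin s, substAct k (μ i) f = f) ↔ ∃ c : k, f = c • (X 1) ^ n := by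
  rw [mem_homogeneousSubmodule] at hf
  refine ⟨fun hfix => ?_, ?_⟩
  · have hstab : AddSubgroup.closure (Set.range μ) ≤ substStabilizer f :=
      (AddSubgroup.closure_le _).2 (Set.range_subset_iff.2 hfix)
    have hcard : n < Fintype.card (Fin s → ZMod p) := by
      have := pow_pos (Fact.out : p.Prime).pos s
      simp only [Fintype.card_fun, ZMod.card, Fintype.card_fin]
      omega
    exact hf.exists_eq_smul_X_one_pow_of_forall_substAct_eq (injective_sum_castHom_mul hμ) hcard
      fun c => hstab (mem_closure_range_of_sum_castHom_mul μ c)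
  · rintro ⟨c, rfl⟩ i
    rw [map_smul, substAct_X_one_pow]

/-- Let `k` be a field of characteristic `p > 2`, `H = (ℤ/p)^s` with `s ≥ 1`
acting on `V^# = kX ⊕ kY` with the `i`-th generator fixing `Y` and sending `X` to `X - μᵢY`,
where `μ₁, …, μ_s` are `𝔽_p`-linearly independent.  Then for every `0 ≤ n ≤ p^s - 1`, the
space of `H`-invariants in `Sⁿ(V^#)` (degree-`n` homogeneous polynomials) is one-dimensional,
spanned by `Yⁿ`. -/
theorem invariants_in_symmetric_powers (p : ℕ) [Fact p.Prime] (hp : Odd p)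
    (k : Type*) [Field k] [CharP k p] (s : ℕ) (hs : 1 ≤ s) (μ : Fin s → k)
    (hμ : ∀ c : Fin s → ZMod p,
      ∑ i, ZMod.castHom (dvd_refl p) k (c i) * μ i = 0 → c = 0)
    (n : ℕ) (hn : n ≤ p ^ s - 1)
    (f : MvPolynomial (Fin 2) k) (hf : f ∈ homogeneousSubmodule (Fin 2) k n) :
    (∀ i : Fin s, substAct k (μ i) f = f) ↔ ∃ c : k, f = c • (X 1) ^ n :=
  invariants_in_symmetric_powers_general p k s μ hμ n hn f hf
end

section
/- Let k be a field of characteristic p > 2 and let H act on k[X,Y] as a unipotent group fixing Y and sending X to X plus multiples of Y. Then for 1 ≤ i, multiplication of polynomials gives an H-equivariant isomorphism S^{p-1}(V^#) ⊗ S^{p-1}(V^#)^{(1)} ⊗ ⋯ ⊗ S^{p-1}(V^#)^{(i-1)} ≅ S^{p^i-1}(V^#), where S^{p-1}(V^#)^{(j)} denotes the k-span of p^j-th powers of elements of S^{p-1}(V^#) inside k[X,Y]. -/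
open MvPolynomial
open scoped TensorProduct

/-- The `j`-th Frobenius twist `S^{p-1}(V^#)^{(j)}` : the `k`-span of the `p^j`-th powers of
the degree-`(p-1)` homogeneous polynomials in `k[X,Y]`. -/
noncomputable def twist (k : Type*) [CommRing k] (p j : ℕ) :
    Submodule k (MvPolynomial (Fin 2) k) :=
  Submodule.span k ((fun f => f ^ p ^ j) '' (homogeneousSubmodule (Fin 2) k (p - 1) : Set (MvPolynomial (Fin 2) k)))

/-- The multiplication map
`S^{p-1}(V^#) ⊗ S^{p-1}(V^#)^{(1)} ⊗ ⋯ ⊗ S^{p-1}(V^#)^{(i-1)} → k[X,Y]`. -/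
noncomputable def mulMap (k : Type*) [CommRing k] (p i : ℕ) :
    (⨂[k] (j : Fin i), (twist k p (j : ℕ))) →ₗ[k] MvPolynomial (Fin 2) k :=
  PiTensorProduct.lift
    ((MultilinearMap.mkPiAlgebra k (Fin i) (MvPolynomial (Fin 2) k)).compLinearMap
      (fun j : Fin i => (twist k p (j : ℕ)).subtype))

namespace SteinbergAux

/-- The exponent pair `(a, b)` as an element of `Fin 2 →₀ ℕ`. -/
noncomputable def dd (a b : ℕ) : Fin 2 →₀ ℕ := Finsupp.single 0 a + Finsupp.single 1 b

lemma dd_apply0 (a b : ℕ) : dd a b 0 = a := by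
  rw [dd, Finsupp.add_apply, Finsupp.single_eq_same, Finsupp.single_eq_of_ne (by decide),
    add_zero]

lemma dd_apply1 (a b : ℕ) : dd a b 1 = b := by
  rw [dd, Finsupp.add_apply, Finsupp.single_eq_same, Finsupp.single_eq_of_ne (by decide),
    zero_add]

lemma fin2_apply_eq {M : Type*} {f g : Fin 2 → M} (h0 : f 0 = g 0) (h1 : f 1 = g 1) :
    ∀ x, f x = g x := by
  intro x
  rcases x with ⟨(_ | _ | x), hx⟩
  · exact h0
  · exact h1
  · omega

lemma eq_dd (u : Fin 2 →₀ ℕ) : u = dd (u 0) (u 1) := by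
  ext x
  refine fin2_apply_eq ?_ ?_ x
  · rw [dd_apply0]
  · rw [dd_apply1]

lemma eq_dd' (u : Fin 2 →₀ ℕ) {a b : ℕ} (h0 : u 0 = a) (h1 : u 1 = b) : u = dd a b := by
  rw [← h0, ← h1]
  exact eq_dd u

lemma degree_two (u : Fin 2 →₀ ℕ) : u.degree = u 0 + u 1 := by
  rw [Finsupp.degree, ← Fin.sum_univ_two (fun i => u i)]
  exact Finset.sum_subset (Finset.subset_univ _)
    (fun x _ hx => Finsupp.notMem_support_iff.mp hx)

lemma degree_dd (a b : ℕ) : (dd a b).degree = a + b := by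
  rw [degree_two, dd_apply0, dd_apply1]

lemma dd_add (a b c d : ℕ) : dd a b + dd c d = dd (a + c) (b + d) := by
  simp only [dd, Finsupp.single_add]
  abel

lemma sum_dd {ι : Type*} (s : Finset ι) (f g : ι → ℕ) :
    ∑ j ∈ s, dd (f j) (g j) = dd (∑ j ∈ s, f j) (∑ j ∈ s, g j) := by
  classical
  induction s using Finset.cons_induction with
  | empty => simp [dd]
  | cons a s ha ih =>
      rw [Finset.sum_cons, Finset.sum_cons, Finset.sum_cons, ih, dd_add]

lemma prod_monomial {k : Type*} [CommSemiring k] {ι : Type*} (s : Finset ι)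
    (d : ι → (Fin 2 →₀ ℕ)) :
    ∏ j ∈ s, monomial (d j) (1 : k) = monomial (∑ j ∈ s, d j) 1 := by
  classical
  induction s using Finset.cons_induction with
  | empty => rw [Finset.prod_empty, Finset.sum_empty, monomial_zero', C_1]
  | cons a s ha ih =>
      rw [Finset.prod_cons, Finset.sum_cons, ih, monomial_mul, one_mul]

lemma geom (p i : ℕ) (hp : 1 ≤ p) :
    ∑ j ∈ Finset.range i, (p - 1) * p ^ j = p ^ i - 1 := by
  induction i with
  | zero => simp
  | succ m ih =>
      rw [Finset.sum_range_succ, ih, pow_succ]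
      have h1 : 1 ≤ p ^ m := Nat.one_le_pow _ _ hp
      have h2 : p ^ m ≤ p ^ m * p := Nat.le_mul_of_pos_right _ hp
      have h3 : (p - 1) * p ^ m = p ^ m * p - p ^ m := by
        rw [Nat.sub_mul, one_mul, mul_comm]
      rw [h3]
      omega

variable (k : Type*) [Field k] (p : ℕ) [Fact p.Prime] [CharP k p]

/-- The homogeneous component of degree `n` is spanned by the monomials of degree `n`. -/
lemma homog_eq_span (n : ℕ) :
    homogeneousSubmodule (Fin 2) k n =
      Submodule.span k (Set.range fun a : Fin (n + 1) =>
        monomial (dd (a : ℕ) (n - (a : ℕ))) (1 : k)) := by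
  apply le_antisymm
  · intro f hf
    rw [← support_sum_monomial_coeff f]
    apply Submodule.sum_mem
    intro u hu
    have hdeg : u 0 + u 1 = n := by
      have h1 : u.degree = n := by
        rw [Finsupp.degree_eq_weight_one]
        exact hf (mem_support_iff.mp hu)
      rwa [degree_two] at h1
    have h2 : monomial u (coeff u f) =
        (coeff u f) • monomial (dd (u 0) (n - u 0)) (1 : k) := by
      rw [smul_monomial, smul_eq_mul, mul_one]
      exact congrArg (fun w => (monomial w (coeff u f) : MvPolynomial (Fin 2) k))
        (eq_dd' u rfl (by omega))
    rw [h2]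
    exact Submodule.smul_mem _ _
      (Submodule.subset_span ⟨⟨u 0, by omega⟩, rfl⟩)
  · rw [Submodule.span_le]
    rintro _ ⟨a, rfl⟩
    have ha : (a : ℕ) ≤ n := by have := a.isLt; omega
    exact isHomogeneous_monomial _ (by rw [degree_dd]; omega)

/-- The `j`-th Frobenius twist is spanned by the corresponding monomials. -/
lemma twist_eq_span (j : ℕ) :
    twist k p j = Submodule.span k
      (Set.range fun a : Fin p =>
        (monomial (dd ((a : ℕ) * p ^ j) ((p - 1 - (a : ℕ)) * p ^ j)) (1 : k))) := by
  have hp2 : 2 ≤ p := (Fact.out : p.Prime).two_le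
  haveI : ExpChar (MvPolynomial (Fin 2) k) p := .prime Fact.out
  apply le_antisymm
  · unfold twist
    rw [Submodule.span_le]
    rintro _ ⟨f, hf, rfl⟩
    simp only [Set.mem_setOf_eq]
    rw [← support_sum_monomial_coeff f, sum_pow_char_pow]
    apply Submodule.sum_mem
    intro u hu
    have hdeg : u 0 + u 1 = p - 1 := by
      have h1 : u.degree = p - 1 := by
        rw [Finsupp.degree_eq_weight_one]
        exact hf (mem_support_iff.mp hu)
      rwa [degree_two] at h1
    rw [monomial_pow]
    have hu' : p ^ j • u = dd ((u 0) * p ^ j) ((p - 1 - u 0) * p ^ j) := by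
      apply eq_dd'
      · rw [Finsupp.smul_apply, smul_eq_mul, mul_comm]
      · rw [Finsupp.smul_apply, smul_eq_mul, mul_comm]
        congr 1
        omega
    have h2 : monomial (p ^ j • u) ((coeff u f) ^ p ^ j) =
        ((coeff u f) ^ p ^ j) •
          monomial (dd ((u 0) * p ^ j) ((p - 1 - u 0) * p ^ j)) (1 : k) := by
      rw [smul_monomial, smul_eq_mul, mul_one, hu']
    rw [h2]
    exact Submodule.smul_mem _ _
      (Submodule.subset_span ⟨⟨u 0, by omega⟩, rfl⟩)
  · rw [Submodule.span_le]
    rintro _ ⟨a, rfl⟩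
    have ha : (a : ℕ) ≤ p - 1 := by have := a.isLt; omega
    unfold twist
    apply Submodule.subset_span
    refine ⟨monomial (dd (a : ℕ) (p - 1 - (a : ℕ))) 1, ?_, ?_⟩
    · exact isHomogeneous_monomial _ (by rw [degree_dd]; omega)
    · show (monomial (dd (a : ℕ) (p - 1 - (a : ℕ))) (1 : k)) ^ p ^ j =
        monomial (dd ((a : ℕ) * p ^ j) ((p - 1 - (a : ℕ)) * p ^ j)) 1
      rw [monomial_pow, one_pow]
      refine congrArg (fun w => (monomial w (1 : k) : MvPolynomial (Fin 2) k)) ?_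
      apply eq_dd'
      · rw [Finsupp.smul_apply, dd_apply0, smul_eq_mul, mul_comm]
      · rw [Finsupp.smul_apply, dd_apply1, smul_eq_mul, mul_comm]

end SteinbergAux

open SteinbergAux

/-- (Steinberg tensor product.)  Let `k` be a field of characteristic
`p > 2` and let `H` be a group acting on `k[X,Y]` by `k`-algebra automorphisms fixing `Y`
and sending `X` to `X` plus a multiple of `Y`.  Then for `1 ≤ i`, multiplication gives an
`H`-equivariant isomorphism
`S^{p-1}(V^#) ⊗ S^{p-1}(V^#)^{(1)} ⊗ ⋯ ⊗ S^{p-1}(V^#)^{(i-1)} ≅ S^{pⁱ-1}(V^#)`: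
the multiplication map is injective with image exactly the degree-`(pⁱ-1)` homogeneous
component, and each Frobenius twist factor is stable under every such automorphism (whence
the isomorphism is equivariant). -/
theorem steinberg_tensor_product (p : ℕ) [Fact p.Prime] (hp : Odd p)
    (k : Type*) [Field k] [CharP k p] (i : ℕ) (hi : 1 ≤ i) :
    Function.Injective (mulMap k p i) ∧
    LinearMap.range (mulMap k p i) = homogeneousSubmodule (Fin 2) k (p ^ i - 1) ∧
    (∀ φ : MvPolynomial (Fin 2) k →ₐ[k] MvPolynomial (Fin 2) k,
      φ (X 1) = X 1 → (∃ c : k, φ (X 0) = X 0 + C c * X 1) →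
      ∀ j : ℕ, (twist k p j).map φ.toLinearMap ≤ twist k p j) := by
  classical
  have hp2 : 2 ≤ p := (Fact.out : p.Prime).two_le
  set n := p ^ i - 1 with hn
  have hpi : 1 ≤ p ^ i := Nat.one_le_pow _ _ (by omega)
  have hn1 : n + 1 = p ^ i := by omega
  -- the distinguished spanning family in each twist
  let B : (j : Fin i) → Fin p → twist k p (j : ℕ) := fun j a =>
    ⟨monomial (dd ((a : ℕ) * p ^ (j : ℕ)) ((p - 1 - (a : ℕ)) * p ^ (j : ℕ))) 1, by
      rw [twist_eq_span]
      exact Submodule.subset_span ⟨a, rfl⟩⟩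
  -- the digits-to-number map
  let ee : (Fin i → Fin p) → ℕ := fun x => ∑ j : Fin i, (x j : ℕ) * p ^ (j : ℕ)
  have hee_eq : ∀ x, ee x = ((finFunctionFinEquiv x : Fin (p ^ i)) : ℕ) :=
    fun x => (finFunctionFinEquiv_apply x).symm
  have hee_lt : ∀ x, ee x < p ^ i := fun x => by
    rw [hee_eq]; exact (finFunctionFinEquiv x).isLt
  have hee_inj : Function.Injective ee := by
    intro x y hxy
    apply finFunctionFinEquiv.injective
    apply Fin.val_injective
    rw [← hee_eq, ← hee_eq]
    exact hxy
  have hee_surj : ∀ b, b < p ^ i → ∃ x, ee x = b := fun b hb =>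
    ⟨finFunctionFinEquiv.symm ⟨b, hb⟩, by
      rw [hee_eq, Equiv.apply_symm_apply]⟩
  have hsum_compl : ∀ x : Fin i → Fin p,
      ∑ j : Fin i, (p - 1 - (x j : ℕ)) * p ^ (j : ℕ) = n - ee x := by
    intro x
    have h1 : ee x + ∑ j : Fin i, (p - 1 - (x j : ℕ)) * p ^ (j : ℕ) = n := by
      rw [hn, ← SteinbergAux.geom p i (by omega),
        ← Fin.sum_univ_eq_sum_range (fun j => (p - 1) * p ^ j) i]
      show (∑ j : Fin i, (x j : ℕ) * p ^ (j : ℕ)) + _ = _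
      rw [← Finset.sum_add_distrib]
      apply Finset.sum_congr rfl
      intro j _
      rw [← Nat.add_mul]
      congr 1
      have := (x j).isLt
      omega
    omega
  have hprod : ∀ x : Fin i → Fin p,
      (∏ j : Fin i, ((B j (x j) : MvPolynomial (Fin 2) k))) =
        monomial (dd (ee x) (n - ee x)) 1 := by
    intro x
    have : (∏ j : Fin i, ((B j (x j) : MvPolynomial (Fin 2) k))) =
        ∏ j : Fin i, monomial
          (dd ((x j : ℕ) * p ^ (j : ℕ)) ((p - 1 - (x j : ℕ)) * p ^ (j : ℕ))) (1 : k) := rfl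
    rw [this, prod_monomial, sum_dd, hsum_compl]
  have hmul_tprod : ∀ v : (j : Fin i) → twist k p (j : ℕ),
      mulMap k p i (PiTensorProduct.tprod k v) =
        ∏ j : Fin i, (v j : MvPolynomial (Fin 2) k) := by
    intro v
    simp [mulMap, MultilinearMap.mkPiAlgebra_apply]
  have hD_inj : Function.Injective
      (fun x : Fin i → Fin p => dd (ee x) (n - ee x)) := by
    intro x y h
    apply hee_inj
    have h0 := congrArg (fun u : Fin 2 →₀ ℕ => u 0) h
    simpa only [dd_apply0] using h0
  -- the inverse map on monomials
  let g : (Fin 2 →₀ ℕ) → ⨂[k] (j : Fin i), (twist k p (j : ℕ)) := fun u =>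
    if h : ∃ x : Fin i → Fin p, dd (ee x) (n - ee x) = u then
      PiTensorProduct.tprod k (fun j => B j (h.choose j)) else 0
  let ψ : MvPolynomial (Fin 2) k →ₗ[k] ⨂[k] (j : Fin i), (twist k p (j : ℕ)) :=
    (basisMonomials (Fin 2) k).constr k g
  have hψ : ∀ x : Fin i → Fin p,
      ψ (monomial (dd (ee x) (n - ee x)) 1) =
        PiTensorProduct.tprod k (fun j => B j (x j)) := by
    intro x
    have hb : (monomial (dd (ee x) (n - ee x)) (1 : k)) =
        basisMonomials (Fin 2) k (dd (ee x) (n - ee x)) := by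
      rw [coe_basisMonomials]
    rw [hb]
    show ((basisMonomials (Fin 2) k).constr k g) _ = _
    rw [Module.Basis.constr_basis]
    have hx : ∃ y : Fin i → Fin p,
        dd (ee y) (n - ee y) = dd (ee x) (n - ee x) := ⟨x, rfl⟩
    show (if h : _ then _ else _) = _
    rw [dif_pos hx]
    congr 1
    funext j
    congr 1
    exact congrFun (hD_inj hx.choose_spec) j
  -- the pure tensors of the spanning families span everything
  have htop : Submodule.span k (Set.range fun x : Fin i → Fin p =>
      (PiTensorProduct.tprod k (fun j => B j (x j)) :
        ⨂[k] (j : Fin i), (twist k p (j : ℕ)))) = ⊤ := by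
    rw [Submodule.eq_top_iff']
    intro t
    induction t using PiTensorProduct.induction_on with
    | smul_tprod r v =>
        apply Submodule.smul_mem
        have hv : ∀ j : Fin i, ∃ c : Fin p → k, (∑ a : Fin p, c a • B j a) = v j := by
          intro j
          have hm : (v j : MvPolynomial (Fin 2) k) ∈
              Submodule.span k (Set.range fun a : Fin p =>
                (monomial (dd ((a : ℕ) * p ^ (j : ℕ))
                  ((p - 1 - (a : ℕ)) * p ^ (j : ℕ))) (1 : k))) := by
            rw [← twist_eq_span]
            exact (v j).2
          obtain ⟨c, hc⟩ := (Submodule.mem_span_range_iff_exists_fun k).mp hm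
          refine ⟨c, Subtype.ext ?_⟩
          rw [← hc]
          push_cast
          rfl
        choose c hc using hv
        have hveq : v = fun j => ∑ a : Fin p, c j a • B j a :=
          funext fun j => (hc j).symm
        rw [hveq, (PiTensorProduct.tprod k).map_sum]
        apply Submodule.sum_mem
        intro r _
        rw [MultilinearMap.map_smul_univ]
        exact Submodule.smul_mem _ _ (Submodule.subset_span ⟨r, rfl⟩)
    | add x y hx hy => exact Submodule.add_mem _ hx hy
  have hleft : ψ.comp (mulMap k p i) = LinearMap.id := by
    apply LinearMap.ext_on htop
    rintro _ ⟨x, rfl⟩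
    rw [LinearMap.comp_apply, hmul_tprod, hprod, hψ, LinearMap.id_apply]
  refine ⟨?_, ?_, ?_⟩
  · intro s t hst
    have hs := LinearMap.congr_fun hleft s
    have ht := LinearMap.congr_fun hleft t
    rw [LinearMap.comp_apply, LinearMap.id_apply] at hs ht
    rw [← hs, ← ht, hst]
  · have h1 : LinearMap.range (mulMap k p i) =
        Submodule.map (mulMap k p i)
          (Submodule.span k (Set.range fun x : Fin i → Fin p =>
            (PiTensorProduct.tprod k (fun j => B j (x j)) :
              ⨂[k] (j : Fin i), (twist k p (j : ℕ))))) := by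
      rw [htop, Submodule.map_top]
    rw [h1, Submodule.map_span, ← Set.range_comp]
    have h2 : ((mulMap k p i) ∘ fun x : Fin i → Fin p =>
        PiTensorProduct.tprod k fun j => B j (x j)) =
        fun x => monomial (dd (ee x) (n - ee x)) (1 : k) := by
      funext x
      rw [Function.comp_apply, hmul_tprod, hprod]
    rw [h2, homog_eq_span k n]
    congr 1
    ext q
    constructor
    · rintro ⟨x, rfl⟩
      exact ⟨⟨ee x, by rw [hn1]; exact hee_lt x⟩, rfl⟩
    · rintro ⟨a, rfl⟩
      obtain ⟨x, hx⟩ := hee_surj (a : ℕ) (by omega)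
      refine ⟨x, ?_⟩
      show (monomial (dd (ee x) (n - ee x)) (1 : k)) =
        monomial (dd ((a : ℕ)) (n - (a : ℕ))) 1
      rw [hx]
  · intro φ hY hX j
    obtain ⟨c, hc⟩ := hX
    have hhom : ∀ (m : ℕ) (f : MvPolynomial (Fin 2) k),
        f ∈ homogeneousSubmodule (Fin 2) k m →
          φ f ∈ homogeneousSubmodule (Fin 2) k m := by
      intro m f hf
      rw [homog_eq_span k m] at hf
      have hgen : (Set.range fun a : Fin (m + 1) =>
          monomial (dd (a : ℕ) (m - (a : ℕ))) (1 : k)) ⊆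
          ↑(Submodule.comap φ.toLinearMap (homogeneousSubmodule (Fin 2) k m)) := by
        rintro _ ⟨a, rfl⟩
        simp only [SetLike.mem_coe, Submodule.mem_comap, AlgHom.toLinearMap_apply]
        have hmono : (monomial (dd (a : ℕ) (m - (a : ℕ))) (1 : k)) =
            X 0 ^ (a : ℕ) * X 1 ^ (m - (a : ℕ)) := by
          rw [X_pow_eq_monomial, X_pow_eq_monomial, monomial_mul, one_mul]
          rfl
        rw [hmono, map_mul, map_pow, map_pow, hY, hc, mem_homogeneousSubmodule]
        have h1 : (X 0 + C c * X 1 : MvPolynomial (Fin 2) k).IsHomogeneous 1 :=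
          (isHomogeneous_X k 0).add ((isHomogeneous_X k 1).C_mul c)
        have h2 := (h1.pow (a : ℕ)).mul ((isHomogeneous_X k 1).pow (m - (a : ℕ)))
        have h3 : 1 * (a : ℕ) + 1 * (m - (a : ℕ)) = m := by have := a.isLt; omega
        rwa [h3] at h2
      exact Submodule.mem_comap.mp (Submodule.span_le.mpr hgen hf)
    unfold twist
    rw [Submodule.map_span, Submodule.span_le]
    rintro _ ⟨q, ⟨f, hf, rfl⟩, rfl⟩
    apply Submodule.subset_span
    refine ⟨φ f, hhom _ f hf, ?_⟩
    simp [map_pow]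
end

section
/- Let k be a field of characteristic p > 2, A = k(Z/p)^s with s ≥ 1 acting on k[X,Y] with generators g_i fixing Y and g_i(X) = X - μ_iY for 𝔽_p-linearly independent μ_i ∈ k. Then S^{p^s - 1}(V^#) is a free module of rank 1 over k(Z/p)^s. -/
/-!
For `x ∈ (ℤ/p)^s` put `λ(x) = ∑ xᵢ μᵢ`; by the hypothesis on the `μᵢ`, `λ` is injective. The
forms `b_x = (X - λ(x) Y)^(p^s - 1)` satisfy `gᵢ b_x = b_(x + eᵢ)`, so the theorem follows once they
form a basis of `S^(p^s-1)`. In characteristic `p`, `(X - λY)^(p^s) = X^(p^s) - λ^(p^s) Y^(p^s)`,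
hence `(X - λY)^(p^s - 1) = ∑ⱼ λ^j X^(p^s-1-j) Y^j`: the coefficients of the `p^s` forms `b_x` make
up a Vandermonde matrix in the `p^s` distinct values `λ(x)`.
-/

open MvPolynomial

open Function

theorem sub_pow_char_pow_sub_one {R : Type*} [CommRing R] [IsDomain R] (p : ℕ) [Fact p.Prime]
    [CharP R p] (n : ℕ) {a b : R} (hab : a ≠ b) :
    (a - b) ^ (p ^ n - 1) = ∑ i ∈ Finset.range (p ^ n), a ^ i * b ^ (p ^ n - 1 - i) := by
  refine mul_right_cancel₀ (sub_ne_zero.2 hab) ?_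
  rw [← pow_succ, Nat.sub_add_cancel (Nat.one_le_pow _ _ (Fact.out : p.Prime).pos),
    sub_pow_char_pow, geom_sum₂_mul]

namespace Polynomial

open scoped Polynomial

theorem coeff_X_sub_C_pow_char_pow_sub_one {R : Type*} [CommRing R] [IsDomain R]
    (p : ℕ) [Fact p.Prime] [CharP R p] (n : ℕ) (c : R) {m : ℕ} (hm : m < p ^ n) :
    ((X - C c) ^ (p ^ n - 1) : R[X]).coeff m = c ^ (p ^ n - 1 - m) := by
  rw [sub_pow_char_pow_sub_one p n (X_ne_C c), finsetSum_coeff]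
  simp_rw [← C_pow, mul_comm (X ^ _), coeff_C_mul_X_pow]
  simp [Finset.mem_range.2 hm]

theorem homogenize_congr {R : Type*} [CommSemiring R] {p q : R[X]} {n : ℕ}
    (h : ∀ m ≤ n, p.coeff m = q.coeff m) : p.homogenize n = q.homogenize n :=
  Finset.sum_congr rfl fun kl hkl => by
    rw [h kl.1 (Finset.HasAntidiagonal.antidiagonal.fst_le hkl)]

end Polynomial

theorem linearIndependent_pow_of_injective {K ι : Type*} [Field K] [Fintype ι] {v : ι → K}
    (hv : Injective v) {n : ℕ} (hn : Fintype.card ι = n) :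
    LinearIndependent K (fun i (j : Fin n) => v i ^ (j : ℕ)) := by
  let e := Fintype.equivFinOfCardEq hn
  have hrows : LinearIndependent K fun i => Matrix.vandermonde (v ∘ e.symm) i :=
    Matrix.linearIndependent_rows_of_det_ne_zero
    (Matrix.det_vandermonde_ne_zero_iff.2 (hv.comp e.symm.injective))
  convert hrows.comp e e.injective using 1
  ext i j
  simp [Matrix.vandermonde_apply]

theorem Module.Basis.repr_apply_sub_of_map_eq {R G V : Type*} [CommSemiring R] [AddCommGroup G]
    [Fintype G] [AddCommMonoid V] [Module R V] {M : Submodule R V} (B : Module.Basis G R M)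
    (T : V →ₗ[R] V) (a : G) (hT : ∀ x, T (B x) = B (x + a)) {f g : M} (hfg : T f = g) (y : G) :
    B.repr g y = B.repr f (y - a) := by
  have hg : g = ∑ x, B.repr f (x - a) • B x := by
    apply Subtype.ext
    rw [← hfg, ← B.sum_repr f]
    simp only [Submodule.coe_sum, Submodule.coe_smul, map_sum, map_smul, hT]
    exact Fintype.sum_equiv (Equiv.addRight a) _ _ fun x => by simp
  rw [hg, B.repr_sum_self]

section BinaryForms

variable {R : Type*} [CommRing R]

variable (R) in
/-- `binaryFormCoeff R n f j` is the coefficient of `X^(n-j) Y^j` in `f`, read off from the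
dehomogenization `f(X, 1)`. -/
noncomputable def binaryFormCoeff (n : ℕ) :
    homogeneousSubmodule (Fin 2) R n →ₗ[R] (Fin (n + 1) → R) :=
  LinearMap.pi fun j => Polynomial.lcoeff R (n - j) ∘ₗ
    (aeval ![Polynomial.X, 1]).toLinearMap ∘ₗ (homogeneousSubmodule (Fin 2) R n).subtype

theorem binaryFormCoeff_injective (n : ℕ) : Injective (binaryFormCoeff R n) := by
  intro f g hfg
  have homogenize_dehomogenize (f : homogeneousSubmodule (Fin 2) R n) :
      (aeval ![Polynomial.X, 1] (f : MvPolynomial (Fin 2) R)).homogenize n = f :=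
    Polynomial.homogenize_eq_of_isHomogeneous ((mem_homogeneousSubmodule n _).1 f.2) (by rfl)
  refine Subtype.ext ?_
  rw [← homogenize_dehomogenize f, ← homogenize_dehomogenize g]
  refine Polynomial.homogenize_congr fun m hm => ?_
  simpa [binaryFormCoeff, Nat.sub_sub_self hm] using congrFun hfg ⟨n - m, by omega⟩

noncomputable def linearFormPow (n : ℕ) (c : R) : homogeneousSubmodule (Fin 2) R n :=
  ⟨(X 0 - C c * X 1) ^ n, by
    simpa using ((isHomogeneous_X R 0).sub (isHomogeneous_C_mul_X c 1)).pow n⟩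

theorem substAct_linearFormPow (n : ℕ) (c d : R) :
    substAct R d (linearFormPow n c : MvPolynomial (Fin 2) R) = linearFormPow n (c + d) := by
  simp only [linearFormPow, substAct, map_pow, map_sub, map_mul, aeval_X, aeval_C, algebraMap_eq,
    ↓reduceIte, one_ne_zero, C_add]
  ring

theorem binaryFormCoeff_linearFormPow [IsDomain R] (p : ℕ) [Fact p.Prime] [CharP R p] (s : ℕ)
    (c : R) (j : Fin (p ^ s - 1 + 1)) :
    binaryFormCoeff R (p ^ s - 1) (linearFormPow (p ^ s - 1) c) j = c ^ (j : ℕ) := by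
  have hj := j.isLt
  have hps := Nat.one_le_pow s p (Fact.out : p.Prime).pos
  simp only [binaryFormCoeff, linearFormPow, LinearMap.pi_apply, LinearMap.coe_comp,
    AlgHom.coe_toLinearMap, Submodule.coe_subtype, comp_apply, Polynomial.lcoeff_apply, map_pow,
    map_sub, map_mul, aeval_X, algHom_C, Polynomial.algebraMap_eq, Matrix.cons_val_zero,
    Matrix.cons_val_one, Matrix.cons_val_fin_one, mul_one]
  rw [Polynomial.coeff_X_sub_C_pow_char_pow_sub_one p s c (by omega), Nat.sub_sub_self (by omega)]

end BinaryForms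

section

variable {K ι : Type*} [Field K] [Fintype ι] (p : ℕ) [Fact p.Prime] [CharP K p] (s : ℕ)

theorem linearIndependent_linearFormPow {a : ι → K} (ha : Injective a)
    (hcard : Fintype.card ι = p ^ s) :
    LinearIndependent K fun x => linearFormPow (p ^ s - 1) (a x) := by
  refine LinearIndependent.of_comp (binaryFormCoeff K (p ^ s - 1)) ?_
  convert linearIndependent_pow_of_injective ha (n := p ^ s - 1 + 1)
    (by have := Nat.one_le_pow s p (Fact.out : p.Prime).pos; omega) using 1
  ext x j
  exact binaryFormCoeff_linearFormPow p s (a x) j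

theorem exists_basis_linearFormPow {a : ι → K} (ha : Injective a)
    (hcard : Fintype.card ι = p ^ s) :
    ∃ B : Module.Basis ι K (homogeneousSubmodule (Fin 2) K (p ^ s - 1)),
      ∀ x, B x = linearFormPow (p ^ s - 1) (a x) := by
  have hli := linearIndependent_linearFormPow p s ha hcard
  have hinj := binaryFormCoeff_injective (R := K) (p ^ s - 1)
  have : FiniteDimensional K (homogeneousSubmodule (Fin 2) K (p ^ s - 1)) :=
    Module.Finite.of_injective _ hinj
  have hle := LinearMap.finrank_le_finrank_of_injective hinj
  refine ⟨basisOfLinearIndependentOfCardEqFinrank' _ hli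
    (le_antisymm hli.fintype_card_le_finrank ?_), fun x => by simp⟩
  have hps := Nat.one_le_pow s p (Fact.out : p.Prime).pos
  simp only [Module.finrank_fin_fun] at hle
  omega

end

theorem top_symmetric_power_free_general (p : ℕ) [Fact p.Prime]
    (k : Type*) [Field k] [CharP k p] (s : ℕ) (μ : Fin s → k)
    (hμ : ∀ c : Fin s → ZMod p,
      ∑ i, ZMod.castHom (dvd_refl p) k (c i) * μ i = 0 → c = 0) :
    ∃ e : homogeneousSubmodule (Fin 2) k (p ^ s - 1) ≃ₗ[k] ((Fin s → ZMod p) → k),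
      ∀ i : Fin s, ∀ f g : homogeneousSubmodule (Fin 2) k (p ^ s - 1),
        substAct k (μ i) (f : MvPolynomial (Fin 2) k) = (g : MvPolynomial (Fin 2) k) →
          e g = fun x => e f (x - Pi.single i 1) := by
  let _ : Algebra (ZMod p) k := ZMod.algebra k p
  -- for this algebra structure `c i • μ i` unfolds to `castHom (c i) * μ i`
  have hinj : Injective (Fintype.linearCombination (ZMod p) μ) :=
    (injective_iff_map_eq_zero _).2 hμ
  obtain ⟨B, hB⟩ := exists_basis_linearFormPow p s hinj (by simp [ZMod.card])
  refine ⟨B.equivFun, fun i f g hfg => funext fun y =>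
    B.repr_apply_sub_of_map_eq (substAct k (μ i)).toLinearMap (Pi.single i 1) (fun x => ?_) hfg y⟩
  rw [AlgHom.toLinearMap_apply, hB, hB, substAct_linearFormPow, map_add,
    Fintype.linearCombination_apply_single, one_smul]

/-- Let `k` be a field of characteristic `p > 2` and `(ℤ/p)^s` (`s ≥ 1`)
act on `k[X,Y]` with the `i`-th generator fixing `Y` and sending `X` to `X - μᵢY`, with
`μ₁,…,μ_s ∈ k` linearly independent over `𝔽_p`.  Then `S^{p^s-1}(V^#)` is a free module of
rank `1` over `k(ℤ/p)^s`: there is a `k`-linear isomorphism with the regular representation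
`k(ℤ/p)^s = ((ℤ/p)^s → k)` (the `i`-th generator acting by translation by the `i`-th basis
vector) commuting with the action of each generator. -/
theorem top_symmetric_power_free (p : ℕ) [Fact p.Prime] (hp : Odd p)
    (k : Type*) [Field k] [CharP k p] (s : ℕ) (hs : 1 ≤ s) (μ : Fin s → k)
    (hμ : ∀ c : Fin s → ZMod p,
      ∑ i, ZMod.castHom (dvd_refl p) k (c i) * μ i = 0 → c = 0) :
    ∃ e : homogeneousSubmodule (Fin 2) k (p ^ s - 1) ≃ₗ[k] ((Fin s → ZMod p) → k),
      ∀ i : Fin s, ∀ f g : homogeneousSubmodule (Fin 2) k (p ^ s - 1),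
        substAct k (μ i) (f : MvPolynomial (Fin 2) k) = (g : MvPolynomial (Fin 2) k) →
          e g = fun x => e f (x - Pi.single i 1) :=
  top_symmetric_power_free_general p k s μ hμ
end
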